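/- arXiv:1009.4807 — 3 statements merged into one kernel-verified Lean document; each statement's English description precedes it below -/
import Mathlib

section
/- There is a constant K > 0 such that for every real Hilbert space H, every n ∈ ℕ, every real n×n matrix (a_{ij}), and all vectors x_1,…,x_n, y_1,…,y_n in the closed unit ball of H, one has |∑_{i,j=1}^n a_{ij} ⟨x_i, y_j⟩| ≤ K · sup{ |∑_{i,j=1}^n a_{ij} s_i t_j| : s_i, t_j ∈ ℝ, |s_i| ≤ 1, |t_j| ≤ 1 }. (Grothendieck's Inequality, Lindenstrauss–Pełczyński version.) -/
open scoped BigOperators RealInnerProductSpace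

open Finset

/-!
Grothendieck's inequality for vectors of a Hilbert space reduces to vectors `u i, v j` in a finite
`ℓ²(ι)`, and there it holds with the trivial constant `card m * card n`. A constant `C` can be
improved to `16 + C / 2`: the Rademacher sums `F i ε = ∑ k, ε k * u i k` embed `ℓ²(ι)` into
`ℓ²({±1}^ι)` isometrically up to the factor `2^card ι`. Truncating `F i` and `G j` at level `4`,
the truncated parts contribute at most `16 * cubeNorm a` since for each fixed `ε` they are
admissible sign vectors scaled by `4`. The tails `F i - truncate 4 (F i)` have squared `ℓ²` norm at
most `3/64` of that of `F i`, because `(t - truncate 4 t)² ≤ t⁴ / 64` and the fourth moment of a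
Rademacher sum is at most three times the square of its second moment; so by the inequality with
constant `C` they contribute at most `C / 4` each. Iterating drives the constant below `33`.
-/

noncomputable section

namespace Grothendieck

section CubeNorm

variable {m n : Type*} [Fintype m] [Fintype n]

def cubeValues (a : m → n → ℝ) : Set ℝ :=
  {r : ℝ | ∃ (s : m → ℝ) (t : n → ℝ), (∀ i, |s i| ≤ 1) ∧ (∀ j, |t j| ≤ 1) ∧
    r = |∑ i, ∑ j, a i j * s i * t j|}

def cubeNorm (a : m → n → ℝ) : ℝ := sSup (cubeValues a)

theorem bddAbove_cubeValues (a : m → n → ℝ) : BddAbove (cubeValues a) := by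
  refine ⟨∑ i, ∑ j, |a i j|, ?_⟩
  rintro r ⟨s, t, hs, ht, rfl⟩
  refine (abs_sum_le_sum_abs _ _).trans <| sum_le_sum fun i _ ↦
    (abs_sum_le_sum_abs _ _).trans <| sum_le_sum fun j _ ↦ ?_
  calc |a i j * s i * t j| = |a i j| * |s i| * |t j| := by rw [abs_mul, abs_mul]
    _ ≤ |a i j| * 1 * 1 := by gcongr; exacts [hs i, ht j]
    _ = |a i j| := by ring

theorem abs_sum_le_cubeNorm (a : m → n → ℝ) {s : m → ℝ} {t : n → ℝ}
    (hs : ∀ i, |s i| ≤ 1) (ht : ∀ j, |t j| ≤ 1) :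
    |∑ i, ∑ j, a i j * s i * t j| ≤ cubeNorm a :=
  le_csSup (bddAbove_cubeValues a) ⟨s, t, hs, ht, rfl⟩

theorem cubeNorm_nonneg (a : m → n → ℝ) : 0 ≤ cubeNorm a :=
  (abs_nonneg _).trans (abs_sum_le_cubeNorm a (s := 0) (t := 0) (by simp) (by simp))

theorem abs_le_cubeNorm (a : m → n → ℝ) (i : m) (j : n) : |a i j| ≤ cubeNorm a := by
  classical
  have h := abs_sum_le_cubeNorm a (s := Pi.single i 1) (t := Pi.single j 1)
    (fun i' ↦ by by_cases h : i' = i <;> simp [h]) (fun j' ↦ by by_cases h : j' = j <;> simp [h])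
  simpa [Pi.single_apply] using h

theorem abs_sum_le_mul_cubeNorm (a : m → n → ℝ) {s : m → ℝ} {t : n → ℝ} {α β : ℝ}
    (hα : 0 < α) (hβ : 0 < β) (hs : ∀ i, |s i| ≤ α) (ht : ∀ j, |t j| ≤ β) :
    |∑ i, ∑ j, a i j * s i * t j| ≤ α * β * cubeNorm a := by
  have h := abs_sum_le_cubeNorm a (s := fun i ↦ s i / α) (t := fun j ↦ t j / β)
    (fun i ↦ by rw [abs_div, abs_of_pos hα, div_le_one hα]; exact hs i)
    (fun j ↦ by rw [abs_div, abs_of_pos hβ, div_le_one hβ]; exact ht j)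
  have hscale : ∑ i, ∑ j, a i j * (s i / α) * (t j / β)
      = (∑ i, ∑ j, a i j * s i * t j) / (α * β) := by
    simp only [sum_div]
    congr! 2 with i _ j _
    field_simp
  rwa [hscale, abs_div, abs_of_pos (mul_pos hα hβ), div_le_iff₀ (mul_pos hα hβ), mul_comm] at h

end CubeNorm

section Pairing

variable {m n ι : Type*} [Fintype m] [Fintype n] [Fintype ι]

def pairing (a : m → n → ℝ) (u : m → ι → ℝ) (v : n → ι → ℝ) : ℝ :=
  ∑ i, ∑ j, a i j * ∑ k, u i k * v j k

theorem pairing_sub_left (a : m → n → ℝ) (u u' : m → ι → ℝ) (v : n → ι → ℝ) :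
    pairing a (u - u') v = pairing a u v - pairing a u' v := by
  simp only [pairing, Pi.sub_apply, sub_mul, sum_sub_distrib, mul_sub]

theorem pairing_sub_right (a : m → n → ℝ) (u : m → ι → ℝ) (v v' : n → ι → ℝ) :
    pairing a u (v - v') = pairing a u v - pairing a u v' := by
  simp only [pairing, Pi.sub_apply, mul_sub, sum_sub_distrib]

theorem abs_pairing_le_of_abs_le (a : m → n → ℝ) {u : m → ι → ℝ} {v : n → ι → ℝ} {α β : ℝ}
    (hα : 0 < α) (hβ : 0 < β) (hu : ∀ i k, |u i k| ≤ α) (hv : ∀ j k, |v j k| ≤ β) :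
    |pairing a u v| ≤ Fintype.card ι * (α * β * cubeNorm a) := by
  have hswap : pairing a u v = ∑ k, ∑ i, ∑ j, a i j * u i k * v j k := by
    simp only [pairing, mul_sum, ← mul_assoc]
    exact (sum_congr rfl fun _ _ ↦ sum_comm).trans sum_comm
  calc |pairing a u v| ≤ ∑ k, |∑ i, ∑ j, a i j * u i k * v j k| := by
        rw [hswap]; exact abs_sum_le_sum_abs _ _
    _ ≤ ∑ _k : ι, α * β * cubeNorm a :=
        sum_le_sum fun k _ ↦ abs_sum_le_mul_cubeNorm a hα hβ (fun i ↦ hu i k) (fun j ↦ hv j k)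
    _ = Fintype.card ι * (α * β * cubeNorm a) := by simp

theorem abs_pairing_le_card_mul_card (a : m → n → ℝ)
    {u : m → ι → ℝ} {v : n → ι → ℝ}
    (hu : ∀ i, ∑ k, u i k ^ 2 ≤ 1) (hv : ∀ j, ∑ k, v j k ^ 2 ≤ 1) :
    |pairing a u v| ≤ Fintype.card m * Fintype.card n * cubeNorm a := by
  have hinner : ∀ i j, |∑ k, u i k * v j k| ≤ 1 := fun i j ↦ by
    rw [← sq_le_one_iff_abs_le_one]
    exact (sum_mul_sq_le_sq_mul_sq _ _ _).trans
      (mul_le_one₀ (hu i) (sum_nonneg fun _ _ ↦ sq_nonneg _) (hv j))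
  calc |pairing a u v| ≤ ∑ i, ∑ j, |a i j * ∑ k, u i k * v j k| :=
        (abs_sum_le_sum_abs _ _).trans (sum_le_sum fun i _ ↦ abs_sum_le_sum_abs _ _)
    _ ≤ ∑ _i : m, ∑ _j : n, cubeNorm a := by
        refine sum_le_sum fun i _ ↦ sum_le_sum fun j _ ↦ ?_
        rw [abs_mul]
        exact mul_le_of_le_one_right (abs_nonneg _) (hinner i j) |>.trans (abs_le_cubeNorm a i j)
    _ = Fintype.card m * Fintype.card n * cubeNorm a := by simp [mul_assoc]

end Pairing

section Rademacher

variable {ι : Type*} [Fintype ι] [DecidableEq ι]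

def signOf (b : Bool) : ℝ := if b then 1 else -1

def rademacherSum (s : Finset ι) (w : ι → ℝ) (ε : ι → Bool) : ℝ :=
  ∑ k ∈ s, signOf (ε k) * w k

omit [Fintype ι] in
theorem rademacherSum_insert {k : ι} {s : Finset ι} (hk : k ∉ s) (w : ι → ℝ) (ε : ι → Bool) :
    rademacherSum (insert k s) w ε = signOf (ε k) * w k + rademacherSum s w ε :=
  sum_insert hk

/-- Pairing each sign pattern with the one flipped at `k` averages out the `k`-th sign. -/
theorem sum_rademacherSum_insert (f : ℝ → ℝ → ℝ) (w z : ι → ℝ) {k : ι} {s : Finset ι}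
    (hk : k ∉ s) :
    ∑ ε : ι → Bool, f (rademacherSum (insert k s) w ε) (rademacherSum (insert k s) z ε) =
      ∑ ε : ι → Bool, (f (rademacherSum s w ε + w k) (rademacherSum s z ε + z k) +
        f (rademacherSum s w ε - w k) (rademacherSum s z ε - z k)) / 2 := by
  let flip : Equiv.Perm (ι → Bool) :=
    Function.Involutive.toPerm (fun ε ↦ Function.update ε k !(ε k)) fun ε ↦ by simp
  have hflip_k (ε : ι → Bool) : flip ε k = !(ε k) := Function.update_self ..
  have hflip_s (w : ι → ℝ) (ε : ι → Bool) : rademacherSum s w (flip ε) = rademacherSum s w ε :=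
    sum_congr rfl fun l hl ↦ by
      rw [show flip ε l = ε l from Function.update_of_ne (ne_of_mem_of_not_mem hl hk) _ _]
  set g : (ι → Bool) → ℝ :=
    fun ε ↦ f (rademacherSum (insert k s) w ε) (rademacherSum (insert k s) z ε)
  calc ∑ ε, g ε = ∑ ε, (g ε + g (flip ε)) / 2 := by
        rw [← sum_div, sum_add_distrib, Equiv.sum_comp]; ring
    _ = _ := sum_congr rfl fun ε _ ↦ by
        simp only [g, rademacherSum_insert hk, hflip_s, hflip_k]
        cases ε k <;> simp [signOf, sub_eq_add_neg, add_comm]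

theorem sum_rademacherSum_mul (w z : ι → ℝ) (s : Finset ι) :
    ∑ ε : ι → Bool, rademacherSum s w ε * rademacherSum s z ε =
      Fintype.card (ι → Bool) * ∑ k ∈ s, w k * z k := by
  induction s using Finset.induction_on with
  | empty => simp [rademacherSum]
  | insert k s hk ih =>
    have havg (x y : ℝ) :
        ((x + w k) * (y + z k) + (x - w k) * (y - z k)) / 2 = x * y + w k * z k := by ring
    simp only [sum_rademacherSum_insert (· * ·) w z hk, havg, sum_add_distrib, ih, sum_insert hk,
      sum_const, card_univ, nsmul_eq_mul]
    ring

theorem sum_rademacherSum_sq (w : ι → ℝ) (s : Finset ι) :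
    ∑ ε : ι → Bool, rademacherSum s w ε ^ 2 = Fintype.card (ι → Bool) * ∑ k ∈ s, w k ^ 2 := by
  simpa only [sq] using sum_rademacherSum_mul w w s

/-- Khintchine's inequality for the fourth moment. -/
theorem sum_rademacherSum_pow_four_le (w : ι → ℝ) (s : Finset ι) :
    ∑ ε : ι → Bool, rademacherSum s w ε ^ 4 ≤
      3 * Fintype.card (ι → Bool) * (∑ k ∈ s, w k ^ 2) ^ 2 := by
  induction s using Finset.induction_on with
  | empty => simp [rademacherSum]
  | insert k s hk ih =>
    set N : ℝ := (Fintype.card (ι → Bool) : ℝ)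
    have havg (x : ℝ) :
        ((x + w k) ^ 4 + (x - w k) ^ 4) / 2 = x ^ 4 + 6 * w k ^ 2 * x ^ 2 + w k ^ 4 := by ring
    have hN : 0 ≤ N := Nat.cast_nonneg _
    simp only [sum_rademacherSum_insert (fun x _ ↦ x ^ 4) w w hk, havg, sum_add_distrib, ← mul_sum,
      sum_rademacherSum_sq, sum_const, card_univ, nsmul_eq_mul, sum_insert hk]
    nlinarith [mul_nonneg hN (pow_nonneg (sq_nonneg (w k)) 2),
      mul_nonneg (mul_nonneg hN (sq_nonneg (w k))) (sum_nonneg fun l (_ : l ∈ s) ↦ sq_nonneg (w l))]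

end Rademacher

section Truncation

def truncate (M t : ℝ) : ℝ := max (-M) (min M t)

variable {M : ℝ}

theorem abs_truncate_le (hM : 0 ≤ M) (t : ℝ) : |truncate M t| ≤ M :=
  abs_le.2 ⟨le_max_left _ _, max_le (by linarith) (min_le_left _ _)⟩

theorem truncate_cases (hM : 0 ≤ M) (t : ℝ) :
    (M ≤ t ∧ truncate M t = M) ∨ (t ≤ -M ∧ truncate M t = -M) ∨ truncate M t = t := by
  unfold truncate
  rcases le_total M t with h | h
  · exact .inl ⟨h, by rw [min_eq_left h, max_eq_right (by linarith)]⟩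
  rcases le_total t (-M) with h' | h'
  · exact .inr (.inl ⟨h', by rw [min_eq_right h, max_eq_left h']⟩)
  · exact .inr (.inr (by rw [min_eq_right h, max_eq_right h']))

theorem sq_truncate_le (hM : 0 ≤ M) (t : ℝ) : truncate M t ^ 2 ≤ t ^ 2 := by
  rcases truncate_cases hM t with ⟨ht, h⟩ | ⟨ht, h⟩ | h <;> rw [h] <;> nlinarith

theorem sq_sub_truncate_le (hM : 0 < M) (t : ℝ) :
    (t - truncate M t) ^ 2 ≤ t ^ 4 / (4 * M ^ 2) := by
  rw [le_div_iff₀ (by positivity)]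
  rcases truncate_cases hM.le t with ⟨ht, h⟩ | ⟨ht, h⟩ | h <;> rw [h]
  · nlinarith [sq_nonneg (t - M), mul_nonneg hM.le (sub_nonneg.2 ht)]
  · nlinarith [sq_nonneg (t + M), mul_nonneg hM.le (by linarith : 0 ≤ -M - t)]
  · rw [sub_self, sq, zero_mul, zero_mul]; positivity

end Truncation

section Embedding

variable {ι : Type*} [Fintype ι] [DecidableEq ι] {w : ι → ℝ}

theorem sum_rademacherSum_sq_le (hw : ∑ k, w k ^ 2 ≤ 1) :
    ∑ ε : ι → Bool, rademacherSum univ w ε ^ 2 ≤ Fintype.card (ι → Bool) := by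
  rw [sum_rademacherSum_sq]
  exact mul_le_of_le_one_right (Nat.cast_nonneg _) hw

theorem sum_sq_sub_truncate_rademacherSum_le {M : ℝ} (hM : 0 < M) (hw : ∑ k, w k ^ 2 ≤ 1) :
    ∑ ε : ι → Bool, (rademacherSum univ w ε - truncate M (rademacherSum univ w ε)) ^ 2 ≤
      3 * Fintype.card (ι → Bool) / (4 * M ^ 2) := by
  have hw2 : (∑ k, w k ^ 2) ^ 2 ≤ 1 := pow_le_one₀ (sum_nonneg fun _ _ ↦ sq_nonneg _) hw
  calc _ ≤ ∑ ε : ι → Bool, rademacherSum univ w ε ^ 4 / (4 * M ^ 2) :=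
        sum_le_sum fun ε _ ↦ sq_sub_truncate_le hM _
    _ ≤ 3 * Fintype.card (ι → Bool) / (4 * M ^ 2) := by
        rw [← sum_div]
        gcongr
        exact (sum_rademacherSum_pow_four_le w univ).trans
          (mul_le_of_le_one_right (by positivity) hw2)

theorem pairing_rademacherSum {m n : Type*} [Fintype m] [Fintype n] (a : m → n → ℝ)
    (u : m → ι → ℝ) (v : n → ι → ℝ) :
    pairing a (fun i ↦ rademacherSum univ (u i)) (fun j ↦ rademacherSum univ (v j)) =
      Fintype.card (ι → Bool) * pairing a u v := by
  simp only [pairing, sum_rademacherSum_mul, mul_sum]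
  exact sum_congr rfl fun i _ ↦ sum_congr rfl fun j _ ↦ sum_congr rfl fun k _ ↦ mul_left_comm ..

end Embedding

section Bootstrap

variable {m n : Type*} [Fintype m] [Fintype n]

def HasGrothendieckConstant (a : m → n → ℝ) (K : ℝ) : Prop :=
  ∀ (ι : Type) [Fintype ι] (u : m → ι → ℝ) (v : n → ι → ℝ),
    (∀ i, ∑ k, u i k ^ 2 ≤ 1) → (∀ j, ∑ k, v j k ^ 2 ≤ 1) → |pairing a u v| ≤ K * cubeNorm a

variable {a : m → n → ℝ} {C K : ℝ}

theorem HasGrothendieckConstant.mono (h : HasGrothendieckConstant a C) (hCK : C ≤ K) :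
    HasGrothendieckConstant a K := fun ι _ u v hu hv ↦
  (h ι u v hu hv).trans (mul_le_mul_of_nonneg_right hCK (cubeNorm_nonneg a))

theorem hasGrothendieckConstant_card_mul_card :
    HasGrothendieckConstant a (Fintype.card m * Fintype.card n) := fun _ _ _ _ hu hv ↦
  abs_pairing_le_card_mul_card a hu hv

theorem HasGrothendieckConstant.abs_pairing_le (h : HasGrothendieckConstant a C)
    {ι : Type} [Fintype ι] {u : m → ι → ℝ} {v : n → ι → ℝ} {A B : ℝ} (hA : 0 < A) (hB : 0 < B)
    (hu : ∀ i, ∑ k, u i k ^ 2 ≤ A) (hv : ∀ j, ∑ k, v j k ^ 2 ≤ B) :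
    |pairing a u v| ≤ C * cubeNorm a * (√A * √B) := by
  have hAB : 0 < √A * √B := by positivity
  have hscaled := h ι (fun i k ↦ u i k / √A) (fun j k ↦ v j k / √B)
    (fun i ↦ by simpa [div_pow, ← sum_div, Real.sq_sqrt hA.le, div_le_one hA] using hu i)
    (fun j ↦ by simpa [div_pow, ← sum_div, Real.sq_sqrt hB.le, div_le_one hB] using hv j)
  have hpair : pairing a (fun i k ↦ u i k / √A) (fun j k ↦ v j k / √B) =
      pairing a u v / (√A * √B) := by
    simp only [pairing, sum_div, mul_div_assoc, div_mul_div_comm]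
  rwa [hpair, abs_div, abs_of_pos hAB, div_le_iff₀ hAB] at hscaled

theorem HasGrothendieckConstant.improve (h : HasGrothendieckConstant a C) (hC : 0 ≤ C) :
    HasGrothendieckConstant a (16 + C / 2) := by
  classical
  intro ι _ u v hu hv
  set N : ℝ := (Fintype.card (ι → Bool) : ℝ)
  have hN : 0 < N := Nat.cast_pos.2 Fintype.card_pos
  set F : m → (ι → Bool) → ℝ := fun i ↦ rademacherSum univ (u i)
  set G : n → (ι → Bool) → ℝ := fun j ↦ rademacherSum univ (v j)
  set F₀ : m → (ι → Bool) → ℝ := fun i ε ↦ truncate 4 (F i ε)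
  set G₀ : n → (ι → Bool) → ℝ := fun j ε ↦ truncate 4 (G j ε)
  have hsplit : N * pairing a u v =
      pairing a F₀ G₀ + pairing a (F - F₀) G + pairing a F₀ (G - G₀) := by
    rw [← pairing_rademacherSum, pairing_sub_left, pairing_sub_right]; ring
  have hbounded : |pairing a F₀ G₀| ≤ N * (4 * 4 * cubeNorm a) :=
    abs_pairing_le_of_abs_le a (by norm_num) (by norm_num)
      (fun _ _ ↦ abs_truncate_le (by norm_num) _) (fun _ _ ↦ abs_truncate_le (by norm_num) _)
  have hF₀ (i : m) : ∑ ε, F₀ i ε ^ 2 ≤ N :=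
    (sum_le_sum fun _ _ ↦ sq_truncate_le (by norm_num) _).trans (sum_rademacherSum_sq_le (hu i))
  have hG (j : n) : ∑ ε, G j ε ^ 2 ≤ N := sum_rademacherSum_sq_le (hv j)
  have hF_tail (i : m) : ∑ ε, (F - F₀) i ε ^ 2 ≤ 3 * N / (4 * 4 ^ 2) :=
    sum_sq_sub_truncate_rademacherSum_le (by norm_num) (hu i)
  have hG_tail (j : n) : ∑ ε, (G - G₀) j ε ^ 2 ≤ 3 * N / (4 * 4 ^ 2) :=
    sum_sq_sub_truncate_rademacherSum_le (by norm_num) (hv j)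
  have hroot : √(3 * N / (4 * 4 ^ 2)) * √N ≤ N / 4 := by
    rw [← Real.sqrt_mul (by positivity), Real.sqrt_le_left (by positivity)]
    nlinarith
  have hCg : 0 ≤ C * cubeNorm a := mul_nonneg hC (cubeNorm_nonneg a)
  have htail₁ : |pairing a (F - F₀) G| ≤ C * cubeNorm a * (N / 4) :=
    (h.abs_pairing_le (by positivity) hN hF_tail hG).trans (by gcongr)
  have htail₂ : |pairing a F₀ (G - G₀)| ≤ C * cubeNorm a * (N / 4) :=
    (h.abs_pairing_le hN (by positivity) hF₀ hG_tail).trans (by rw [mul_comm √N]; gcongr)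
  refine le_of_mul_le_mul_left ?_ hN
  calc N * |pairing a u v|
      = |pairing a F₀ G₀ + pairing a (F - F₀) G + pairing a F₀ (G - G₀)| := by
        rw [← hsplit, abs_mul, abs_of_pos hN]
    _ ≤ |pairing a F₀ G₀| + |pairing a (F - F₀) G| + |pairing a F₀ (G - G₀)| :=
        abs_add_three _ _ _
    _ ≤ N * (4 * 4 * cubeNorm a) + C * cubeNorm a * (N / 4) + C * cubeNorm a * (N / 4) := by
        gcongr
    _ = N * ((16 + C / 2) * cubeNorm a) := by ring

theorem hasGrothendieckConstant_iterate (k : ℕ) :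
    HasGrothendieckConstant a (32 + Fintype.card m * Fintype.card n / 2 ^ k) := by
  induction k with
  | zero => exact hasGrothendieckConstant_card_mul_card.mono (by simp)
  | succ k ih =>
    convert ih.improve (by positivity) using 1
    ring

theorem hasGrothendieckConstant_33 : HasGrothendieckConstant a 33 := by
  refine (hasGrothendieckConstant_iterate (Fintype.card m * Fintype.card n)).mono ?_
  have hc : (Fintype.card m * Fintype.card n : ℝ) ≤ 2 ^ (Fintype.card m * Fintype.card n) := by
    exact_mod_cast Nat.lt_two_pow_self.le
  linarith [(div_le_one (by positivity)).2 hc]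

end Bootstrap

theorem exists_coordinates {H : Type*} [NormedAddCommGroup H] [InnerProductSpace ℝ H]
    {m n : Type*} [Finite m] [Finite n] (x : m → H) (y : n → H) :
    ∃ (d : ℕ) (u : m → Fin d → ℝ) (v : n → Fin d → ℝ), (∀ i, ∑ k, u i k ^ 2 = ‖x i‖ ^ 2) ∧
      (∀ j, ∑ k, v j k ^ 2 = ‖y j‖ ^ 2) ∧ ∀ i j, ∑ k, u i k * v j k = ⟪x i, y j⟫ := by
  let V : Submodule ℝ H := Submodule.span ℝ (Set.range x ∪ Set.range y)
  have : FiniteDimensional ℝ V :=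
    FiniteDimensional.span_of_finite ℝ ((Set.finite_range x).union (Set.finite_range y))
  let b := stdOrthonormalBasis ℝ V
  let x' (i : m) : V := ⟨x i, Submodule.subset_span (.inl ⟨i, rfl⟩)⟩
  let y' (j : n) : V := ⟨y j, Submodule.subset_span (.inr ⟨j, rfl⟩)⟩
  have hcoord (p q : V) : ∑ k, ⟪p, b k⟫ * ⟪q, b k⟫ = ⟪(p : H), q⟫ := by
    rw [← Submodule.coe_inner, ← b.sum_inner_mul_inner]
    exact sum_congr rfl fun k _ ↦ congrArg _ (real_inner_comm (b k) q)
  refine ⟨_, fun i k ↦ ⟪x' i, b k⟫, fun j k ↦ ⟪y' j, b k⟫, fun i ↦ ?_, fun j ↦ ?_,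
    fun i j ↦ hcoord (x' i) (y' j)⟩
  · simpa only [sq, real_inner_self_eq_norm_sq] using hcoord (x' i) (x' i)
  · simpa only [sq, real_inner_self_eq_norm_sq] using hcoord (y' j) (y' j)

end Grothendieck

/-- **Grothendieck's Inequality** (Lindenstrauss–Pełczyński version). There is a universal
constant `K > 0` such that for every real Hilbert space `H`, every `n`, every `n × n` real
matrix `a` and all vectors `x i`, `y j` in the closed unit ball of `H`,
`|∑ a i j ⟪x i, y j⟫| ≤ K * sup { |∑ a i j * s i * t j| : |s i| ≤ 1, |t j| ≤ 1 }`. -/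
theorem grothendieck_inequality :
    ∃ K : ℝ, 0 < K ∧
      ∀ (H : Type) [NormedAddCommGroup H] [InnerProductSpace ℝ H] [CompleteSpace H]
        (n : ℕ) (a : Fin n → Fin n → ℝ) (x y : Fin n → H),
        (∀ i, ‖x i‖ ≤ 1) → (∀ j, ‖y j‖ ≤ 1) →
        |∑ i, ∑ j, a i j * ⟪x i, y j⟫| ≤
          K * sSup {r : ℝ | ∃ s t : Fin n → ℝ, (∀ i, |s i| ≤ 1) ∧ (∀ j, |t j| ≤ 1) ∧
            r = |∑ i, ∑ j, a i j * s i * t j|} := by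
  refine ⟨33, by norm_num, fun H _ _ _ n a x y hx hy ↦ ?_⟩
  obtain ⟨d, u, v, hu, hv, huv⟩ := Grothendieck.exists_coordinates x y
  have hbound := Grothendieck.hasGrothendieckConstant_33 (a := a) (Fin d) u v
    (fun i ↦ (hu i).trans_le (pow_le_one₀ (norm_nonneg _) (hx i)))
    (fun j ↦ (hv j).trans_le (pow_le_one₀ (norm_nonneg _) (hy j)))
  simp only [Grothendieck.pairing, huv] at hbound
  exact hbound
end
end

section
/- Let E and F be Banach spaces, p ≥ 1, and T : E → F a continuous linear operator. Then T is absolutely p-summing if and only if there exist a constant C ≥ 0 and a Borel probability measure μ on the closed unit ball B_{E*} of the dual of E, endowed with the weak-star topology, such that ‖T(x)‖ ≤ C (∫_{B_{E*}} |φ(x)|^p dμ(φ))^{1/p} for every x ∈ E. (Pietsch Domination Theorem.) -/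
open scoped BigOperators
open MeasureTheory

/-- The weak ℓ_p norm of a finite family `x` in a normed space `E`. -/
noncomputable def weakNorm (𝕜 : Type*) [RCLike 𝕜] {E : Type*} [NormedAddCommGroup E]
    [NormedSpace 𝕜 E] (p : ℝ) {m : ℕ} (x : Fin m → E) : ℝ :=
  ⨆ φ : {φ : E →L[𝕜] 𝕜 // ‖φ‖ ≤ 1}, (∑ j, ‖φ.1 (x j)‖ ^ p) ^ (1 / p)

/-- A continuous linear operator `u : E → F` is absolutely `p`-summing. -/
def AbsolutelySumming (𝕜 : Type*) [RCLike 𝕜] {E F : Type*} [NormedAddCommGroup E]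
    [NormedSpace 𝕜 E] [NormedAddCommGroup F] [NormedSpace 𝕜 F] (p : ℝ)
    (u : E →L[𝕜] F) : Prop :=
  ∃ C : ℝ, 0 ≤ C ∧ ∀ (m : ℕ) (x : Fin m → E),
    (∑ j, ‖u (x j)‖ ^ p) ^ (1 / p) ≤ C * weakNorm 𝕜 p x

/-- The closed unit ball of the dual of `E`, with the weak-star topology. -/
def dualBall (𝕜 : Type*) [RCLike 𝕜] (E : Type*) [NormedAddCommGroup E]
    [NormedSpace 𝕜 E] : Set (WeakDual 𝕜 E) :=
  {φ : WeakDual 𝕜 E | ‖(WeakDual.toStrongDual φ : E →L[𝕜] 𝕜)‖ ≤ 1}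

/-- The Borel σ-algebra on the weak-star dual. -/
noncomputable instance (𝕜 E : Type*) [RCLike 𝕜] [NormedAddCommGroup E] [NormedSpace 𝕜 E] :
    MeasurableSpace (WeakDual 𝕜 E) := borel _

/-!
For `C ≥ 0`, consider on the weak-* compact dual ball `K` the continuous functions
`φ ↦ ∑ⱼ (‖T xⱼ‖ ^ p - C ^ p * ‖φ xⱼ‖ ^ p)`, one for each finite family `(xⱼ)`. They form a convex
set (rescale the families by `a ^ (1 / p)` and concatenate them), and since the weak `ℓ_p` norm
is attained on `K`, the `p`-summing inequality with constant `C` says exactly that each of them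
is `≤ 0` somewhere. Hahn–Banach separates this set from the open cone of strictly positive
functions in `C(K, ℝ)`; the separating functional is positive, and the Riesz–Markov–Kakutani
theorem turns it into a probability measure `μ` under which all these functions have nonpositive
integral. One-element families give the domination `‖T x‖ ^ p ≤ C ^ p ∫ ‖φ x‖ ^ p dμ`.
Conversely, integrating the domination along a family and bounding `∑ⱼ ‖φ xⱼ‖ ^ p` by the `p`-th
power of the weak norm gives the `p`-summing inequality.
-/

open scoped CompactlySupported

namespace ContinuousMap

variable {X : Type*} [TopologicalSpace X]

theorem convex_setOf_forall_pos : Convex ℝ {h : C(X, ℝ) | ∀ x, 0 < h x} :=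
  fun _ hf _ hg _ _ ha hb hab x => by simpa using convex_Ioi (0 : ℝ) (hf x) (hg x) ha hb hab

variable [CompactSpace X]

theorem isOpen_setOf_forall_pos : IsOpen {h : C(X, ℝ) | ∀ x, 0 < h x} := by
  simpa [Set.MapsTo] using isOpen_setOfPred_mapsTo isCompact_univ (isOpen_Ioi (a := (0 : ℝ)))

theorem exists_positiveLinearMap_nonpos_of_convex {S : Set C(X, ℝ)} (hS : Convex ℝ S)
    (h0 : 0 ∈ S) (hneg : ∀ g ∈ S, ∃ x, g x ≤ 0) :
    ∃ Λ : C(X, ℝ) →ₚ[ℝ] ℝ, Λ 1 = 1 ∧ ∀ g ∈ S, Λ g ≤ 0 := by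
  have hdisj : Disjoint {h : C(X, ℝ) | ∀ x, 0 < h x} S := Set.disjoint_left.2 fun g hgP hgS =>
    let ⟨x, hx⟩ := hneg g hgS
    (hgP x).not_ge hx
  obtain ⟨L, u, hLP, hLS⟩ :=
    geometric_hahn_banach_open convex_setOf_forall_pos isOpen_setOf_forall_pos hS hdisj
  have hu : u ≤ 0 := by simpa using hLS 0 h0
  have hL1 : 0 < -L 1 := neg_pos.2 <| (hLP 1 fun _ => one_pos).trans_le hu
  -- a nonnegative `f` is the limit of the strictly positive `f + δ • 1` as `δ → 0`
  have hL_le : ∀ f : C(X, ℝ), 0 ≤ f → L f ≤ u := fun f hf =>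
    le_of_forall_pos_lt_add fun ε hε => by
      have := hLP (f + (ε / -L 1) • 1) fun x =>
        add_pos_of_nonneg_of_pos (hf x) (by simpa using div_pos hε hL1)
      rw [map_add, map_smul, smul_eq_mul, div_mul_eq_mul_div, mul_div_assoc,
        div_neg_self (neg_pos.1 hL1).ne, mul_neg_one] at this
      linarith
  refine ⟨.mk₀ ((-L 1)⁻¹ • -(L : C(X, ℝ) →ₗ[ℝ] ℝ)) fun f hf => ?_, ?_, fun g hg => ?_⟩
  · simpa using mul_nonneg (inv_nonneg.2 hL1.le) (neg_nonneg.2 ((hL_le f hf).trans hu))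
  · exact inv_mul_cancel₀ hL1.ne'
  · have hu0 : 0 ≤ u := (map_zero L).symm.trans_le (hL_le 0 le_rfl)
    exact mul_nonpos_of_nonneg_of_nonpos (inv_nonneg.2 hL1.le)
      (neg_nonpos.2 (hu0.trans (hLS g hg)))

variable [T2Space X] [MeasurableSpace X] [BorelSpace X]

theorem exists_isProbabilityMeasure_integral_eq (Λ : C(X, ℝ) →ₚ[ℝ] ℝ) (hΛ : Λ 1 = 1) :
    ∃ μ : Measure X, IsProbabilityMeasure μ ∧ ∀ f : C(X, ℝ), ∫ x, f x ∂μ = Λ f := by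
  let Λc : C_c(X, ℝ) →ₚ[ℝ] ℝ := .mk₀
    { toFun f := Λ f.toContinuousMap
      map_add' f g := map_add Λ _ _
      map_smul' c f := map_smul Λ c _ }
    fun f hf => Λ.map_nonneg hf
  have hμΛ (f : C(X, ℝ)) : ∫ x, f x ∂(RealRMK.rieszMeasure Λc) = Λ f :=
    RealRMK.integral_rieszMeasure Λc (CompactlySupportedContinuousMap.continuousMapEquiv f)
  refine ⟨RealRMK.rieszMeasure Λc, ⟨?_⟩, hμΛ⟩
  have := hμΛ 1
  simp only [one_apply, integral_const, smul_eq_mul, mul_one, hΛ] at this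
  exact (ENNReal.toReal_eq_one_iff _).1 this

theorem exists_isProbabilityMeasure_integral_nonpos_of_convex {S : Set C(X, ℝ)}
    (hS : Convex ℝ S) (h0 : 0 ∈ S) (hneg : ∀ g ∈ S, ∃ x, g x ≤ 0) :
    ∃ μ : Measure X, IsProbabilityMeasure μ ∧ ∀ g ∈ S, ∫ x, g x ∂μ ≤ 0 := by
  obtain ⟨Λ, hΛ1, hΛS⟩ := exists_positiveLinearMap_nonpos_of_convex hS h0 hneg
  obtain ⟨μ, hμ, hμΛ⟩ := exists_isProbabilityMeasure_integral_eq Λ hΛ1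
  exact ⟨μ, hμ, fun g hg => (hμΛ g).trans_le (hΛS g hg)⟩

end ContinuousMap

theorem Real.le_mul_rpow_one_div_iff {a b C p : ℝ} (ha : 0 ≤ a) (hb : 0 ≤ b) (hC : 0 ≤ C)
    (hp : 0 < p) : a ≤ C * b ^ (1 / p) ↔ a ^ p ≤ C ^ p * b := by
  rw [← Real.rpow_le_rpow_iff ha (by positivity) hp, Real.mul_rpow hC (by positivity), one_div,
    Real.rpow_inv_rpow hb hp.ne']

theorem Real.rpow_one_div_le_mul_rpow_one_div_iff {a b C p : ℝ} (ha : 0 ≤ a) (hb : 0 ≤ b)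
    (hC : 0 ≤ C) (hp : 0 < p) : a ^ (1 / p) ≤ C * b ^ (1 / p) ↔ a ≤ C ^ p * b := by
  rw [Real.le_mul_rpow_one_div_iff (by positivity) hb hC hp, one_div, Real.rpow_inv_rpow ha hp.ne']

theorem RCLike.norm_ofReal_rpow_one_div_rpow {𝕜 : Type*} [RCLike 𝕜] {a p : ℝ} (ha : 0 ≤ a)
    (hp : p ≠ 0) : ‖((a ^ (1 / p) : ℝ) : 𝕜)‖ ^ p = a := by
  rw [RCLike.norm_ofReal, abs_of_nonneg (by positivity), one_div, Real.rpow_inv_rpow ha hp]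

section DualBall

variable {𝕜 : Type*} [RCLike 𝕜] {E : Type*} [NormedAddCommGroup E] [NormedSpace 𝕜 E]

instance : BorelSpace (WeakDual 𝕜 E) := ⟨rfl⟩

instance : CompactSpace (dualBall 𝕜 E) := isCompact_iff_compactSpace.mp <| by
  simpa [dualBall, Set.preimage, Metric.mem_closedBall, dist_zero_right] using
    WeakDual.isCompact_closedBall (𝕜 := 𝕜) (E := E) 0 1

instance : Nonempty (dualBall 𝕜 E) := ⟨⟨0, by simp [dualBall]⟩⟩

theorem continuous_norm_apply_rpow {p : ℝ} (hp : 0 ≤ p) (x : E) :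
    Continuous fun φ : dualBall 𝕜 E => ‖(φ : WeakDual 𝕜 E) x‖ ^ p :=
  (((WeakDual.eval_continuous x).comp continuous_subtype_val).norm).rpow_const fun _ => Or.inr hp

theorem weakNorm_eq_iSup_dualBall (p : ℝ) {m : ℕ} (x : Fin m → E) :
    weakNorm 𝕜 p x = ⨆ φ : dualBall 𝕜 E, (∑ j, ‖(φ : WeakDual 𝕜 E) (x j)‖ ^ p) ^ (1 / p) :=
  ((WeakDual.toStrongDual.toEquiv.subtypeEquiv fun _ => Iff.rfl).iSup_comp
    (g := fun φ : {φ : E →L[𝕜] 𝕜 // ‖φ‖ ≤ 1} => (∑ j, ‖φ.1 (x j)‖ ^ p) ^ (1 / p))).symm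

theorem integrable_norm_apply_rpow {p : ℝ} (hp : 0 ≤ p) (μ : Measure (dualBall 𝕜 E))
    [IsFiniteMeasure μ] (x : E) :
    Integrable (fun φ : dualBall 𝕜 E => ‖(φ : WeakDual 𝕜 E) x‖ ^ p) μ :=
  (continuous_norm_apply_rpow hp x).integrable_of_hasCompactSupport (.of_compactSpace _)

theorem weakNorm_nonneg (p : ℝ) {m : ℕ} (x : Fin m → E) : 0 ≤ weakNorm 𝕜 p x :=
  Real.iSup_nonneg fun _ => by positivity

section
variable {p : ℝ} (hp : 0 ≤ p) {m : ℕ} (x : Fin m → E)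
include hp

theorem continuous_sum_norm_apply_rpow_rpow :
    Continuous fun φ : dualBall 𝕜 E => (∑ j, ‖(φ : WeakDual 𝕜 E) (x j)‖ ^ p) ^ (1 / p) :=
  (continuous_finsetSum _ fun j _ => continuous_norm_apply_rpow hp (x j)).rpow_const
    fun _ => Or.inr (by positivity)

theorem sum_norm_apply_rpow_rpow_le_weakNorm (φ : dualBall 𝕜 E) :
    (∑ j, ‖(φ : WeakDual 𝕜 E) (x j)‖ ^ p) ^ (1 / p) ≤ weakNorm 𝕜 p x :=
  weakNorm_eq_iSup_dualBall (𝕜 := 𝕜) p x ▸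
    le_ciSup (isCompact_range (continuous_sum_norm_apply_rpow_rpow (𝕜 := 𝕜) hp x)).bddAbove φ

theorem exists_weakNorm_eq :
    ∃ φ : dualBall 𝕜 E, weakNorm 𝕜 p x = (∑ j, ‖(φ : WeakDual 𝕜 E) (x j)‖ ^ p) ^ (1 / p) := by
  obtain ⟨φ₀, -, hφ₀⟩ := isCompact_univ.exists_isMaxOn Set.univ_nonempty
    (continuous_sum_norm_apply_rpow_rpow hp x (𝕜 := 𝕜)).continuousOn
  refine ⟨φ₀, le_antisymm ?_ (sum_norm_apply_rpow_rpow_le_weakNorm hp x φ₀)⟩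
  exact weakNorm_eq_iSup_dualBall (𝕜 := 𝕜) p x ▸ ciSup_le fun φ => hφ₀ (Set.mem_univ φ)

end

theorem sum_norm_apply_rpow_le_weakNorm_rpow {p : ℝ} (hp : 0 < p) {m : ℕ} (x : Fin m → E)
    (φ : dualBall 𝕜 E) : ∑ j, ‖(φ : WeakDual 𝕜 E) (x j)‖ ^ p ≤ weakNorm 𝕜 p x ^ p := by
  have := sum_norm_apply_rpow_rpow_le_weakNorm hp.le x φ
  rwa [one_div, Real.rpow_inv_le_iff_of_pos (by positivity) (weakNorm_nonneg (𝕜 := 𝕜) p x) hp]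
    at this

end DualBall

section Pietsch

variable {𝕜 : Type*} [RCLike 𝕜] {E F : Type*} [NormedAddCommGroup E] [NormedSpace 𝕜 E]
  [NormedAddCommGroup F] [NormedSpace 𝕜 F] {p : ℝ}

theorem absolutelySumming_of_norm_le_integral (hp : 0 < p) {C : ℝ} (hC : 0 ≤ C)
    (T : E →L[𝕜] F) (μ : Measure (dualBall 𝕜 E)) [IsProbabilityMeasure μ]
    (hT : ∀ x : E, ‖T x‖ ≤ C * (∫ φ, ‖(φ : WeakDual 𝕜 E) x‖ ^ p ∂μ) ^ (1 / p)) :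
    AbsolutelySumming 𝕜 p T := by
  refine ⟨C, hC, fun m x => ?_⟩
  have hterm (j : Fin m) : ‖T (x j)‖ ^ p ≤ C ^ p * ∫ φ, ‖(φ : WeakDual 𝕜 E) (x j)‖ ^ p ∂μ :=
    (Real.le_mul_rpow_one_div_iff (norm_nonneg _) (integral_nonneg fun _ => by positivity) hC
      hp).1 (hT (x j))
  have hint (z : E) := integrable_norm_apply_rpow hp.le μ z
  have hw := weakNorm_nonneg (𝕜 := 𝕜) p x
  rw [← Real.rpow_rpow_inv hw hp.ne', ← one_div,
    Real.rpow_one_div_le_mul_rpow_one_div_iff (by positivity) (by positivity) hC hp]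
  calc ∑ j, ‖T (x j)‖ ^ p ≤ ∑ j, C ^ p * ∫ φ, ‖(φ : WeakDual 𝕜 E) (x j)‖ ^ p ∂μ :=
        Finset.sum_le_sum fun j _ => hterm j
    _ = C ^ p * ∫ φ, ∑ j, ‖(φ : WeakDual 𝕜 E) (x j)‖ ^ p ∂μ := by
        rw [← Finset.mul_sum, integral_finsetSum _ fun j _ => hint (x j)]
    _ ≤ C ^ p * weakNorm 𝕜 p x ^ p := by
        gcongr
        simpa using integral_mono (integrable_finsetSum _ fun j _ => hint (x j))
          (integrable_const (weakNorm 𝕜 p x ^ p)) (sum_norm_apply_rpow_le_weakNorm_rpow hp x)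

noncomputable def pietschSum (p C : ℝ) (T : E →L[𝕜] F) {m : ℕ} (x : Fin m → E)
    (φ : dualBall 𝕜 E) : ℝ :=
  ∑ j, (‖T (x j)‖ ^ p - C ^ p * ‖(φ : WeakDual 𝕜 E) (x j)‖ ^ p)

variable {C : ℝ} {T : E →L[𝕜] F}

theorem continuous_pietschSum (hp : 0 ≤ p) {m : ℕ} (x : Fin m → E) :
    Continuous (pietschSum p C T x) :=
  continuous_finsetSum _ fun j _ =>
    continuous_const.sub (continuous_const.mul (continuous_norm_apply_rpow hp (x j)))

theorem pietschSum_append {m n : ℕ} (x : Fin m → E) (y : Fin n → E) :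
    pietschSum p C T (Fin.append x y) = pietschSum p C T x + pietschSum p C T y := by
  ext φ
  simp only [pietschSum, Fin.sum_univ_add, Fin.append_left, Fin.append_right, Pi.add_apply]

theorem pietschSum_smul (hp : p ≠ 0) {a : ℝ} (ha : 0 ≤ a) {m : ℕ} (x : Fin m → E) :
    pietschSum p C T (fun j => ((a ^ (1 / p) : ℝ) : 𝕜) • x j) = a • pietschSum p C T x := by
  ext φ
  simp only [pietschSum, map_smul, smul_eq_mul, norm_smul, norm_mul,
    Real.mul_rpow (norm_nonneg _) (norm_nonneg _), RCLike.norm_ofReal_rpow_one_div_rpow ha hp,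
    Pi.smul_apply, Finset.mul_sum]
  exact Finset.sum_congr rfl fun j _ => by ring

theorem convex_setOf_coe_eq_pietschSum (hp : p ≠ 0) :
    Convex ℝ {g : C(dualBall 𝕜 E, ℝ) | ∃ (m : ℕ) (x : Fin m → E), ⇑g = pietschSum p C T x} := by
  rintro _ ⟨m, x, hx⟩ _ ⟨n, y, hy⟩ a b ha hb -
  refine ⟨m + n, Fin.append (fun j => ((a ^ (1 / p) : ℝ) : 𝕜) • x j)
    (fun j => ((b ^ (1 / p) : ℝ) : 𝕜) • y j), ?_⟩
  rw [pietschSum_append, pietschSum_smul hp ha, pietschSum_smul hp hb, ← hx, ← hy]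
  rfl

theorem exists_pietschSum_nonpos (hp : 0 < p) (hC : 0 ≤ C)
    (hT : ∀ (m : ℕ) (x : Fin m → E), (∑ j, ‖T (x j)‖ ^ p) ^ (1 / p) ≤ C * weakNorm 𝕜 p x)
    {m : ℕ} (x : Fin m → E) : ∃ φ, pietschSum p C T x φ ≤ 0 := by
  obtain ⟨φ, hφ⟩ := exists_weakNorm_eq (𝕜 := 𝕜) hp.le x
  refine ⟨φ, ?_⟩
  have := (Real.rpow_one_div_le_mul_rpow_one_div_iff (by positivity) (by positivity) hC hp).1
    (hφ ▸ hT m x)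
  simpa [pietschSum, Finset.sum_sub_distrib, Finset.mul_sum] using this

theorem AbsolutelySumming.exists_norm_le_integral (hp : 0 < p) (hT : AbsolutelySumming 𝕜 p T) :
    ∃ C : ℝ, 0 ≤ C ∧ ∃ μ : Measure (dualBall 𝕜 E), IsProbabilityMeasure μ ∧
      ∀ x : E, ‖T x‖ ≤ C * (∫ φ, ‖(φ : WeakDual 𝕜 E) x‖ ^ p ∂μ) ^ (1 / p) := by
  obtain ⟨C, hC, hT⟩ := hT
  obtain ⟨μ, hμ, hμS⟩ := ContinuousMap.exists_isProbabilityMeasure_integral_nonpos_of_convex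
    (convex_setOf_coe_eq_pietschSum (C := C) (T := T) hp.ne')
    ⟨0, Fin.elim0, by ext; simp [pietschSum]⟩
    (fun g ⟨m, x, hg⟩ => hg ▸ exists_pietschSum_nonpos hp hC hT x)
  refine ⟨C, hC, μ, hμ, fun x => ?_⟩
  have hx : ‖T x‖ ^ p ≤ C ^ p * ∫ φ, ‖(φ : WeakDual 𝕜 E) x‖ ^ p ∂μ := by
    have := hμS ⟨_, continuous_pietschSum hp.le ![x]⟩ ⟨1, ![x], rfl⟩
    simp only [ContinuousMap.coe_mk, pietschSum, Fin.sum_univ_one, Matrix.cons_val_zero] at this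
    rw [integral_sub (integrable_const _) ((integrable_norm_apply_rpow hp.le μ x).const_mul _),
      integral_const_mul, integral_const] at this
    simpa [sub_nonpos] using this
  exact (Real.le_mul_rpow_one_div_iff (norm_nonneg _) (integral_nonneg fun _ => by positivity)
    hC hp).2 hx

end Pietsch

theorem pietsch_domination_general (𝕜 : Type*) [RCLike 𝕜] {E F : Type*} [NormedAddCommGroup E]
    [NormedSpace 𝕜 E] [NormedAddCommGroup F] [NormedSpace 𝕜 F]
    (p : ℝ) (hp : 1 ≤ p) (T : E →L[𝕜] F) :
    AbsolutelySumming 𝕜 p T ↔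
      ∃ C : ℝ, 0 ≤ C ∧ ∃ μ : Measure (dualBall 𝕜 E), IsProbabilityMeasure μ ∧
        ∀ x : E, ‖T x‖ ≤ C * (∫ φ, ‖(φ : WeakDual 𝕜 E) x‖ ^ p ∂μ) ^ (1 / p) := by
  have hp₀ : 0 < p := zero_lt_one.trans_le hp
  refine ⟨fun hT => hT.exists_norm_le_integral hp₀, ?_⟩
  rintro ⟨C, hC, μ, hμ, hT⟩
  exact absolutelySumming_of_norm_le_integral hp₀ hC T μ hT

/-- **Pietsch Domination Theorem.** A continuous linear operator `T : E → F` between Banach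
spaces is absolutely `p`-summing iff there are `C ≥ 0` and a Borel probability measure `μ`
on the closed unit ball of the dual of `E`, with the weak-star topology, such that
`‖T x‖ ≤ C (∫ |φ x|^p dμ(φ))^{1/p}` for every `x`. -/
theorem pietsch_domination (𝕜 : Type*) [RCLike 𝕜] {E F : Type*} [NormedAddCommGroup E]
    [NormedSpace 𝕜 E] [CompleteSpace E] [NormedAddCommGroup F] [NormedSpace 𝕜 F]
    [CompleteSpace F] (p : ℝ) (hp : 1 ≤ p) (T : E →L[𝕜] F) :
    AbsolutelySumming 𝕜 p T ↔
      ∃ C : ℝ, 0 ≤ C ∧ ∃ μ : Measure (dualBall 𝕜 E), IsProbabilityMeasure μ ∧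
        ∀ x : E, ‖T x‖ ≤ C * (∫ φ, ‖(φ : WeakDual 𝕜 E) x‖ ^ p ∂μ) ^ (1 / p) :=
  pietsch_domination_general 𝕜 p hp T
end

section
/- For every positive integer n there exists a constant C_n ≥ 0 such that for all Banach spaces E_1,…,E_n over ℂ (or ℝ), every continuous n-linear form U : E_1 × ⋯ × E_n → 𝕂, every N ∈ ℕ and all vectors x_j^{(k)} ∈ E_k (k = 1,…,n, j = 1,…,N), one has (∑_{j_1,…,j_n=1}^N |U(x_{j_1}^{(1)},…,x_{j_n}^{(n)})|^{2n/(n+1)})^{(n+1)/(2n)} ≤ C_n ‖U‖ ∏_{k=1}^n ‖(x_j^{(k)})_{j=1}^N‖_{w,1}. (Bohnenblust–Hille inequality, rewritten form.) -/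
open scoped BigOperators

/-!
Induction on the number of variables, with constant `√3 ^ (n - 1)`. For `n + 1 ≥ 2` variables
write `P = 2(n+1)/(n+2)` and `q = 2n/(n+1)`. Blei's inequality (Hölder's inequality for mixed
norms, followed by Minkowski's inequality) bounds the `ℓ^P`-norm of the array
`A j = |U(x_{j 0}, …, x_{j n})|` by the geometric mean over `k` of its `ℓ^q(ℓ²)`-norms, the
`ℓ²`-norm being taken in the index `j k`. Khintchine's inequality, with constant `√3` coming from
the fourth-moment bound `𝔼 |∑ ε_a c_a|⁴ ≤ 3 (∑ |c_a|²)²`, bounds that `ℓ²`-norm by `√3` times the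
average over signs `ε` of `|U(…, ∑ ε_a x_a^{(k)}, …)|`. Minkowski's inequality takes the
`ℓ^q`-norm inside the average, and the induction hypothesis applies to the `n`-linear form
`U(…, ∑ ε_a x_a^{(k)}, …)`, whose norm is at most `‖U‖ ‖x^{(k)}‖_{w,1}` because, by Hahn–Banach,
a sign combination has norm at most the weak `ℓ¹`-norm.
-/

open scoped NNReal ENNReal RealInnerProductSpace
open Finset

namespace BohnenblustHille

noncomputable def lpNorm {ι : Type*} [Fintype ι] (p : ℝ) (f : ι → ℝ≥0) : ℝ≥0 :=
  (∑ i, f i ^ p) ^ (1 / p)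

section lpNorm

variable {ι κ : Type*} [Fintype ι] [Fintype κ]

lemma lpNorm_one (f : ι → ℝ≥0) : lpNorm 1 f = ∑ i, f i := by simp [lpNorm]

lemma lpNorm_rpow_eq_sum {p : ℝ} (hp : p ≠ 0) (f : ι → ℝ≥0) : lpNorm p f ^ p = ∑ i, f i ^ p := by
  rw [lpNorm, ← NNReal.rpow_mul, one_div_mul_cancel hp, NNReal.rpow_one]

lemma lpNorm_mono {p : ℝ} (hp : 0 < p) {f g : ι → ℝ≥0} (h : ∀ i, f i ≤ g i) :
    lpNorm p f ≤ lpNorm p g := by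
  unfold lpNorm
  gcongr with i
  exact h i

lemma lpNorm_const_mul {p : ℝ} (hp : 0 < p) (c : ℝ≥0) (f : ι → ℝ≥0) :
    lpNorm p (fun i => c * f i) = c * lpNorm p f := by
  simp only [lpNorm, NNReal.mul_rpow, ← mul_sum]
  rw [← NNReal.rpow_mul, mul_one_div_cancel hp.ne', NNReal.rpow_one]

lemma lpNorm_rpow {p s : ℝ} (hs : s ≠ 0) (f : ι → ℝ≥0) :
    lpNorm p (fun i => f i ^ s) = lpNorm (p * s) f ^ s := by
  simp only [lpNorm, ← NNReal.rpow_mul]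
  congr 1
  · simp_rw [mul_comm s p]
  · field_simp

lemma lpNorm_sum_le {p : ℝ} (hp : 1 ≤ p) (f : κ → ι → ℝ≥0) :
    lpNorm p (fun i => ∑ k, f k i) ≤ ∑ k, lpNorm p (f k) := by
  classical
  suffices ∀ t : Finset κ, lpNorm p (fun i => ∑ k ∈ t, f k i) ≤ ∑ k ∈ t, lpNorm p (f k) from
    this univ
  intro t
  induction t using Finset.induction_on with
  | empty => simp [lpNorm, NNReal.zero_rpow, (zero_lt_one.trans_le hp).ne']
  | insert a t ha ih =>
    simp only [sum_insert ha]
    exact (NNReal.Lp_add_le univ _ _ hp).trans (add_le_add le_rfl ih)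

lemma lpNorm_lpNorm_swap_le {p r : ℝ} (hp : 0 < p) (hpr : p ≤ r) (f : κ → ι → ℝ≥0) :
    lpNorm r (fun i => lpNorm p fun k => f k i) ≤ lpNorm p fun k => lpNorm r (f k) := by
  suffices lpNorm (r / p) (fun i => ∑ k, f k i ^ p) ≤ ∑ k, lpNorm (r / p) fun i => f k i ^ p by
    simp only [lpNorm_rpow hp.ne', ← lpNorm_rpow_eq_sum hp.ne', div_mul_cancel₀ r hp.ne'] at this
    exact (NNReal.rpow_le_rpow_iff hp).1 this
  exact lpNorm_sum_le ((one_le_div hp).2 hpr) _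

lemma lpNorm_expect_le {p : ℝ} (hp : 1 ≤ p) (f : κ → ι → ℝ≥0) :
    lpNorm p (fun i => 𝔼 k, f k i) ≤ 𝔼 k, lpNorm p (f k) := by
  simp only [Fintype.expect_eq_sum_div_card, div_eq_inv_mul]
  rw [lpNorm_const_mul (by linarith)]
  gcongr
  exact lpNorm_sum_le hp f

lemma sum_prod_rpow_le_prod_sum_rpow {θ : κ → ℝ} (hθ : ∀ k, 0 ≤ θ k) (hθ1 : ∑ k, θ k = 1)
    (f : κ → ι → ℝ≥0) : ∑ i, ∏ k, f k i ^ θ k ≤ ∏ k, (∑ i, f k i) ^ θ k := by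
  let _ : MeasurableSpace ι := ⊤
  have h := ENNReal.lintegral_prod_norm_pow_le (μ := MeasureTheory.Measure.count) univ
    (f := fun k i => (f k i : ℝ≥0∞)) (fun k _ => by fun_prop) hθ1 (fun k _ => hθ k)
  simp only [MeasureTheory.lintegral_count, tsum_fintype] at h
  rw [← ENNReal.coe_le_coe]
  push_cast [ENNReal.coe_rpow_of_nonneg _ (hθ _)]
  exact h

lemma sum_prod_le_prod_lpNorm {r : κ → ℝ} (hr : ∀ k, 0 < r k) (hr1 : ∑ k, (r k)⁻¹ = 1)
    (f : κ → ι → ℝ≥0) : ∑ i, ∏ k, f k i ≤ ∏ k, lpNorm (r k) (f k) := by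
  have h := sum_prod_rpow_le_prod_sum_rpow (fun k => (inv_pos.2 (hr k)).le) hr1
    (fun k i => f k i ^ r k)
  simp only [← NNReal.rpow_mul, mul_inv_cancel₀ (hr _).ne', NNReal.rpow_one] at h
  simpa [lpNorm] using h

lemma prod_rpow_inv_card {m : ℕ} (hm : m ≠ 0) (B : ℝ≥0) : ∏ _k : Fin m, B ^ (m : ℝ)⁻¹ = B := by
  rw [prod_const, card_univ, Fintype.card_fin, ← NNReal.rpow_natCast, ← NNReal.rpow_mul,
    inv_mul_cancel₀ (Nat.cast_ne_zero.2 hm), NNReal.rpow_one]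

end lpNorm

section mixedNorm

variable {ι : Type*} [Fintype ι]

lemma sum_pi_fin_succ {M : Type*} [AddCommMonoid M] {n : ℕ} (F : (Fin (n + 1) → ι) → M) :
    ∑ j, F j = ∑ j : Fin n → ι, ∑ a, F (Fin.cons a j) := by
  rw [← (Fin.consEquiv fun _ => ι).sum_comp F, Fintype.sum_prod_type, sum_comm]
  rfl

/-- The mixed `ℓ^p`-norm, coordinate `0` innermost. -/
noncomputable def mixedNorm : {n : ℕ} → (Fin n → ℝ) → ((Fin n → ι) → ℝ≥0) → ℝ≥0
  | 0, _, f => f Fin.elim0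
  | _ + 1, p, f => mixedNorm (Fin.tail p) fun j => lpNorm (p 0) fun a => f (Fin.cons a j)

lemma mixedNorm_succ {n : ℕ} (p : Fin (n + 1) → ℝ) (f : (Fin (n + 1) → ι) → ℝ≥0) :
    mixedNorm p f = mixedNorm (Fin.tail p) fun j => lpNorm (p 0) fun a => f (Fin.cons a j) :=
  rfl

lemma lpNorm_lpNorm_cons {q : ℝ} (hq : q ≠ 0) {n : ℕ} (f : (Fin (n + 1) → ι) → ℝ≥0) :
    (lpNorm q fun j => lpNorm q fun a => f (Fin.cons a j)) = lpNorm q f := by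
  rw [lpNorm, lpNorm, sum_pi_fin_succ]
  simp_rw [lpNorm_rpow_eq_sum hq]

lemma mixedNorm_const {q : ℝ} (hq : q ≠ 0) :
    ∀ {n : ℕ} (f : (Fin n → ι) → ℝ≥0), mixedNorm (fun _ => q) f = lpNorm q f
  | 0, f => by
    rw [lpNorm, Fintype.sum_unique, ← NNReal.rpow_mul, mul_one_div_cancel hq, NNReal.rpow_one]
    rfl
  | n + 1, f => by
    rw [mixedNorm_succ, Fin.tail_def, mixedNorm_const hq, lpNorm_lpNorm_cons hq]

lemma mixedNorm_rpow {s : ℝ} (hs : s ≠ 0) :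
    ∀ {n : ℕ} (p : Fin n → ℝ) (f : (Fin n → ι) → ℝ≥0),
      mixedNorm p (fun j => f j ^ s) = mixedNorm (fun i => p i * s) f ^ s
  | 0, _, _ => rfl
  | n + 1, p, f => by
    simp only [mixedNorm_succ, lpNorm_rpow hs, mixedNorm_rpow hs]
    rfl

lemma sum_prod_le_prod_mixedNorm {κ : Type*} [Fintype κ] :
    ∀ {n : ℕ} {r : κ → Fin n → ℝ}, (∀ k i, 0 < r k i) → (∀ i, ∑ k, (r k i)⁻¹ = 1) →
      ∀ f : κ → (Fin n → ι) → ℝ≥0, ∑ j, ∏ k, f k j ≤ ∏ k, mixedNorm (r k) (f k)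
  | 0, _, _, _, f => by
    simp only [Fintype.sum_unique]
    rfl
  | n + 1, r, hr, hr1, f => by
    calc ∑ j, ∏ k, f k j
        = ∑ j : Fin n → ι, ∑ a, ∏ k, f k (Fin.cons a j) := sum_pi_fin_succ _
      _ ≤ ∑ j : Fin n → ι, ∏ k, lpNorm (r k 0) fun a => f k (Fin.cons a j) := by
        gcongr with j
        exact sum_prod_le_prod_lpNorm (fun k => hr k 0) (hr1 0) _
      _ ≤ ∏ k, mixedNorm (r k) (f k) :=
        sum_prod_le_prod_mixedNorm (fun k i => hr k i.succ) (fun i => hr1 i.succ) _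

lemma mixedNorm_update_zero_two {q : ℝ} (hq : q ≠ 0) {n : ℕ} (f : (Fin (n + 1) → ι) → ℝ≥0) :
    mixedNorm (Function.update (fun _ => q) 0 2) f =
      lpNorm q fun j => lpNorm 2 fun a => f ((0 : Fin (n + 1)).insertNth a j) := by
  rw [mixedNorm_succ, Fin.tail_update_zero, Function.update_self]
  simp only [Fin.tail_def, mixedNorm_const hq, Fin.insertNth_zero']

/-- Minkowski's inequality moves the `ℓ²`-norm in coordinate `k` innermost. -/
lemma mixedNorm_update_two_le {q : ℝ} (hq : 0 < q) (hq2 : q ≤ 2) :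
    ∀ {n : ℕ} (k : Fin (n + 1)) (f : (Fin (n + 1) → ι) → ℝ≥0),
      mixedNorm (Function.update (fun _ => q) k 2) f ≤
        lpNorm q fun j => lpNorm 2 fun a => f (k.insertNth a j)
  | 0, k, f => by
    rw [Fin.fin_one_eq_zero k, mixedNorm_update_zero_two hq.ne']
  | n + 1, k, f => by
    induction k using Fin.cases with
    | zero => rw [mixedNorm_update_zero_two hq.ne']
    | succ k =>
      rw [mixedNorm_succ, Fin.tail_update_succ, Function.update_of_ne (Fin.succ_ne_zero k).symm]
      calc mixedNorm (Function.update (fun _ => q) k 2)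
            (fun j => lpNorm q fun a => f (Fin.cons a j))
          ≤ lpNorm q fun j => lpNorm 2 fun b => lpNorm q fun a =>
              f (Fin.cons a (k.insertNth b j)) :=
            mixedNorm_update_two_le hq hq2 k _
        _ ≤ lpNorm q fun j => lpNorm q fun a => lpNorm 2 fun b =>
              f (Fin.cons a (k.insertNth b j)) :=
            lpNorm_mono hq fun j => lpNorm_lpNorm_swap_le hq hq2 _
        _ = lpNorm q fun j => lpNorm 2 fun b => f (k.succ.insertNth b j) := by
            conv_rhs => rw [← lpNorm_lpNorm_cons hq.ne']
            simp only [Fin.insertNth_succ_cons]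

end mixedNorm

section Blei

noncomputable def bhExponent (n : ℕ) : ℝ := 2 * n / (n + 1)

lemma bhExponent_pos {n : ℕ} (hn : 0 < n) : 0 < bhExponent n := by
  unfold bhExponent
  positivity

lemma one_le_bhExponent {n : ℕ} (hn : 0 < n) : 1 ≤ bhExponent n := by
  have : (1 : ℝ) ≤ n := by exact_mod_cast hn
  rw [bhExponent, le_div_iff₀ (by positivity)]
  linarith

lemma bhExponent_le_two (n : ℕ) : bhExponent n ≤ 2 := by
  rw [bhExponent, div_le_iff₀ (by positivity)]
  linarith

lemma natCast_div_bhExponent (n : ℕ) :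
    ((n + 2 : ℕ) : ℝ) / bhExponent (n + 2) =
      2⁻¹ + (((n + 2 : ℕ) : ℝ) - 1) / bhExponent (n + 1) := by
  simp only [bhExponent]
  push_cast
  field_simp
  ring

lemma sum_inv_update_div_eq_one {m : ℕ} {P q : ℝ} (hP : P ≠ 0)
    (hPq : m / P = 2⁻¹ + (m - 1) / q) (i : Fin m) :
    ∑ k : Fin m, (Function.update (fun _ => q) k 2 i / (P / m))⁻¹ = 1 := by
  have hm : (m : ℝ) ≠ 0 := Nat.cast_ne_zero.2 (Fin.pos i).ne'
  have hupd : ∀ k, (Function.update (fun _ => q) k 2 i)⁻¹ =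
      q⁻¹ + if k = i then 2⁻¹ - q⁻¹ else 0 := by
    intro k
    rcases eq_or_ne i k with rfl | h
    · simp
    · simp [Function.update_of_ne h, h.symm]
  simp only [inv_div, div_eq_mul_inv (P / _), ← mul_sum, hupd, sum_add_distrib, sum_const,
    card_univ, Fintype.card_fin, nsmul_eq_mul, sum_ite_eq', mem_univ, if_true]
  rw [show (m : ℝ) * q⁻¹ + (2⁻¹ - q⁻¹) = m / P by rw [hPq]; ring]
  field_simp

/-- **Blei's inequality**. -/
theorem lpNorm_bhExponent_le_prod {ι : Type*} [Fintype ι] {n : ℕ}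
    (A : (Fin (n + 2) → ι) → ℝ≥0) :
    lpNorm (bhExponent (n + 2)) A ≤
      ∏ k : Fin (n + 2), (lpNorm (bhExponent (n + 1)) fun j => lpNorm 2 fun a =>
        A (k.insertNth a j)) ^ ((n + 2 : ℕ) : ℝ)⁻¹ := by
  set P := bhExponent (n + 2)
  set q := bhExponent (n + 1)
  have hP : 0 < P := bhExponent_pos (by omega)
  have hq : 0 < q := bhExponent_pos (by omega)
  set s := P / ((n + 2 : ℕ) : ℝ) with hs_def
  have hs : 0 < s := by positivity
  set p : Fin (n + 2) → Fin (n + 2) → ℝ := fun k => Function.update (fun _ => q) k 2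
  have hp : ∀ k i, 0 < p k i / s := fun k i => by
    by_cases h : i = k <;> simp [p, h, hq, hs]
  have holder : lpNorm P A ^ P ≤ ∏ k, mixedNorm (p k) A ^ s := by
    calc lpNorm P A ^ P = ∑ j, ∏ _k : Fin (n + 2), A j ^ s := by
          rw [lpNorm_rpow_eq_sum hP.ne']
          congr 1 with j
          rw [prod_const, card_univ, Fintype.card_fin, ← NNReal.rpow_natCast,
            ← NNReal.rpow_mul, hs_def]
          push_cast
          field_simp
      _ ≤ ∏ k, mixedNorm (fun i => p k i / s) fun j => A j ^ s :=
          sum_prod_le_prod_mixedNorm hp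
            (sum_inv_update_div_eq_one hP.ne' (natCast_div_bhExponent n)) _
      _ = ∏ k, mixedNorm (p k) A ^ s := by
          simp only [mixedNorm_rpow hs.ne', div_mul_cancel₀ _ hs.ne']
  calc lpNorm P A = (lpNorm P A ^ P) ^ P⁻¹ := (NNReal.rpow_rpow_inv hP.ne' _).symm
    _ ≤ (∏ k : Fin (n + 2), (lpNorm q fun j => lpNorm 2 fun a => A (k.insertNth a j)) ^ s) ^
          P⁻¹ := by
        gcongr
        refine holder.trans (prod_le_prod' fun k _ => ?_)
        gcongr
        exact mixedNorm_update_two_le hq (bhExponent_le_two _) k A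
    _ = _ := by
        rw [← NNReal.finsetProd_rpow]
        congr 1 with k
        rw [← NNReal.rpow_mul, hs_def]
        field_simp

end Blei

section Khintchine

variable {ι F : Type*} [Fintype ι] [DecidableEq ι]

/-- Flipping the sign `ε a` leaves a Rademacher sum over `s ∌ a` unchanged. -/
lemma expect_units_mul_eq_zero [AddCommGroup F] {a : ι} {s : Finset ι} (ha : a ∉ s)
    (c : ι → F) (g : F → ℝ) : 𝔼 ε : ι → ℤˣ, ((ε a : ℤ) : ℝ) * g (∑ j ∈ s, ε j • c j) = 0 := by
  set X : (ι → ℤˣ) → ℝ := fun ε => ((ε a : ℤ) : ℝ) * g (∑ j ∈ s, ε j • c j)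
  have hflip : ∀ ε, -X ε = X (Pi.mulSingle a (-1) * ε : ι → ℤˣ) := by
    intro ε
    have hs : ∑ j ∈ s, (Pi.mulSingle a (-1) * ε : ι → ℤˣ) j • c j = ∑ j ∈ s, ε j • c j :=
      sum_congr rfl fun j hj => by
        rw [Pi.mul_apply, Pi.mulSingle_eq_of_ne (ne_of_mem_of_not_mem hj ha), one_mul]
    simp only [X, hs]
    simp
  have := Fintype.expect_equiv (Equiv.mulLeft (Pi.mulSingle a (-1))) _ _ hflip
  rw [expect_neg_distrib] at this
  linarith

variable [NormedAddCommGroup F] [InnerProductSpace ℝ F]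

lemma norm_add_units_smul_sq (x y : F) (u : ℤˣ) :
    ‖x + u • y‖ ^ 2 = ‖x‖ ^ 2 + ‖y‖ ^ 2 + ((u : ℤ) : ℝ) * (2 * ⟪x, y⟫) := by
  rcases Int.units_eq_one_or u with rfl | rfl
  · simp [norm_add_sq_real]
    ring
  · simp [← sub_eq_add_neg, norm_sub_sq_real]
    ring

lemma expect_norm_sq_sum_units_smul (s : Finset ι) (c : ι → F) :
    𝔼 ε : ι → ℤˣ, ‖∑ j ∈ s, ε j • c j‖ ^ 2 = ∑ j ∈ s, ‖c j‖ ^ 2 := by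
  induction s using Finset.induction_on with
  | empty => simp
  | insert a s ha ih =>
    have hodd := expect_units_mul_eq_zero ha c fun x => 2 * ⟪x, c a⟫
    simp only [sum_insert ha, add_comm (_ • c a), norm_add_units_smul_sq, expect_add_distrib,
      Fintype.expect_const, ih] at hodd ⊢
    rw [hodd]
    ring

lemma expect_norm_pow_four_sum_units_smul_le (s : Finset ι) (c : ι → F) :
    𝔼 ε : ι → ℤˣ, ‖∑ j ∈ s, ε j • c j‖ ^ 4 ≤ 3 * (∑ j ∈ s, ‖c j‖ ^ 2) ^ 2 := by
  induction s using Finset.induction_on with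
  | empty => simp
  | insert a s ha ih =>
    set S : (ι → ℤˣ) → F := fun ε => ∑ j ∈ s, ε j • c j
    have hpt : ∀ ε : ι → ℤˣ, ‖S ε + ε a • c a‖ ^ 4 ≤
        ‖S ε‖ ^ 4 + 6 * ‖c a‖ ^ 2 * ‖S ε‖ ^ 2 + ‖c a‖ ^ 4 +
          ((ε a : ℤ) : ℝ) * (4 * ⟪S ε, c a⟫ * (‖S ε‖ ^ 2 + ‖c a‖ ^ 2)) := by
      intro ε
      have hsq : ((ε a : ℤ) : ℝ) ^ 2 = 1 := by
        rcases Int.units_eq_one_or (ε a) with h | h <;> simp [h]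
      have hinner : ⟪S ε, c a⟫ ^ 2 ≤ ‖S ε‖ ^ 2 * ‖c a‖ ^ 2 := by
        rw [← mul_pow]
        exact sq_le_sq' (neg_le_of_abs_le (abs_real_inner_le_norm _ _)) (real_inner_le_norm _ _)
      rw [show ‖S ε + ε a • c a‖ ^ 4 = (‖S ε + ε a • c a‖ ^ 2) ^ 2 by ring,
        norm_add_units_smul_sq]
      linear_combination 4 * hinner + 4 * ⟪S ε, c a⟫ ^ 2 * hsq
    have hodd := expect_units_mul_eq_zero ha c fun x => 4 * ⟪x, c a⟫ * (‖x‖ ^ 2 + ‖c a‖ ^ 2)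
    have hsq := expect_norm_sq_sum_units_smul s c
    have hσ : 0 ≤ ∑ j ∈ s, ‖c j‖ ^ 2 := by positivity
    calc 𝔼 ε : ι → ℤˣ, ‖∑ j ∈ insert a s, ε j • c j‖ ^ 4
        ≤ 𝔼 ε : ι → ℤˣ, (‖S ε‖ ^ 4 + 6 * ‖c a‖ ^ 2 * ‖S ε‖ ^ 2 + ‖c a‖ ^ 4 +
          ((ε a : ℤ) : ℝ) * (4 * ⟪S ε, c a⟫ * (‖S ε‖ ^ 2 + ‖c a‖ ^ 2))) := by
          simp only [sum_insert ha, add_comm (_ • c a)]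
          exact expect_le_expect fun ε _ => hpt ε
      _ ≤ 3 * (∑ j ∈ insert a s, ‖c j‖ ^ 2) ^ 2 := by
          simp only [expect_add_distrib, ← mul_expect, Fintype.expect_const, S, hodd, hsq,
            sum_insert ha]
          nlinarith [ih]

omit [DecidableEq ι] in
lemma expect_sq_pow_three_le {X : ι → ℝ} (hX : ∀ i, 0 ≤ X i) :
    (𝔼 i, X i ^ 2) ^ 3 ≤ (𝔼 i, X i) ^ 2 * 𝔼 i, X i ^ 4 := by
  have h13 : (𝔼 i, X i ^ 2) ^ 2 ≤ (𝔼 i, X i) * 𝔼 i, X i ^ 3 := by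
    calc (𝔼 i, X i ^ 2) ^ 2 = (𝔼 i, √(X i) * (√(X i) * X i)) ^ 2 := by
          simp_rw [← mul_assoc, Real.mul_self_sqrt (hX _), sq]
      _ ≤ (𝔼 i, √(X i) ^ 2) * 𝔼 i, (√(X i) * X i) ^ 2 := expect_mul_sq_le_sq_mul_sq _ _ _
      _ = (𝔼 i, X i) * 𝔼 i, X i ^ 3 := by
          simp_rw [mul_pow, Real.sq_sqrt (hX _)]
          ring_nf
  have h24 : (𝔼 i, X i ^ 3) ^ 2 ≤ (𝔼 i, X i ^ 2) * 𝔼 i, X i ^ 4 := by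
    calc (𝔼 i, X i ^ 3) ^ 2 = (𝔼 i, X i * X i ^ 2) ^ 2 := by ring_nf
      _ ≤ (𝔼 i, X i ^ 2) * 𝔼 i, (X i ^ 2) ^ 2 := expect_mul_sq_le_sq_mul_sq _ _ _
      _ = (𝔼 i, X i ^ 2) * 𝔼 i, X i ^ 4 := by ring_nf
  have h2 : 0 ≤ 𝔼 i, X i ^ 2 := expect_nonneg fun i _ => by positivity
  have h4 : 0 ≤ 𝔼 i, X i ^ 4 := expect_nonneg fun i _ => by positivity
  rcases h2.eq_or_lt with h0 | hpos
  · rw [← h0, zero_pow three_ne_zero]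
    exact mul_nonneg (sq_nonneg _) h4
  have : (𝔼 i, X i ^ 2) * (𝔼 i, X i ^ 2) ^ 3 ≤
      (𝔼 i, X i ^ 2) * ((𝔼 i, X i) ^ 2 * 𝔼 i, X i ^ 4) := by
    calc (𝔼 i, X i ^ 2) * (𝔼 i, X i ^ 2) ^ 3 = ((𝔼 i, X i ^ 2) ^ 2) ^ 2 := by ring
      _ ≤ ((𝔼 i, X i) * 𝔼 i, X i ^ 3) ^ 2 := by gcongr
      _ = (𝔼 i, X i) ^ 2 * (𝔼 i, X i ^ 3) ^ 2 := by ring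
      _ ≤ (𝔼 i, X i) ^ 2 * ((𝔼 i, X i ^ 2) * 𝔼 i, X i ^ 4) := by gcongr
      _ = _ := by ring
  exact le_of_mul_le_mul_left this hpos

/-- **Khintchine's inequality**. -/
theorem sum_norm_sq_le_three_mul_sq_expect_norm (c : ι → F) :
    ∑ j, ‖c j‖ ^ 2 ≤ 3 * (𝔼 ε : ι → ℤˣ, ‖∑ j, ε j • c j‖) ^ 2 := by
  set σ := ∑ j, ‖c j‖ ^ 2
  have hinterp := expect_sq_pow_three_le fun ε : ι → ℤˣ => norm_nonneg (∑ j, ε j • c j)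
  rw [expect_norm_sq_sum_units_smul] at hinterp
  have hσ : 0 ≤ σ := by positivity
  rcases hσ.eq_or_lt with h0 | hpos
  · rw [← h0]
    positivity
  have : σ * σ ^ 2 ≤ 3 * (𝔼 ε : ι → ℤˣ, ‖∑ j, ε j • c j‖) ^ 2 * σ ^ 2 := by
    calc σ * σ ^ 2 = σ ^ 3 := by ring
      _ ≤ _ := hinterp
      _ ≤ (𝔼 ε : ι → ℤˣ, ‖∑ j, ε j • c j‖) ^ 2 * (3 * σ ^ 2) := by
          gcongr
          exact expect_norm_pow_four_sum_units_smul_le univ c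
      _ = _ := by ring
  exact le_of_mul_le_mul_right this (by positivity)

theorem lpNorm_two_nnnorm_le (c : ι → F) :
    lpNorm 2 (fun j => ‖c j‖₊) ≤ NNReal.sqrt 3 * 𝔼 ε : ι → ℤˣ, ‖∑ j, ε j • c j‖₊ := by
  rw [lpNorm, ← NNReal.sqrt_eq_rpow, ← NNReal.sqrt_sq (𝔼 ε : ι → ℤˣ, _), ← NNReal.sqrt_mul,
    NNReal.sqrt_le_sqrt, ← NNReal.coe_le_coe]
  push_cast [NNReal.coe_expect]
  exact_mod_cast sum_norm_sq_le_three_mul_sq_expect_norm c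

end Khintchine

section weakNorm

variable {𝕜 E : Type*} [RCLike 𝕜] [NormedAddCommGroup E] [NormedSpace 𝕜 E] {m : ℕ}

lemma weakNorm_one_eq (x : Fin m → E) :
    weakNorm 𝕜 1 x = ⨆ φ : {φ : E →L[𝕜] 𝕜 // ‖φ‖ ≤ 1}, ∑ j, ‖φ.1 (x j)‖ := by
  simp [weakNorm]

lemma weakNorm_nonneg (x : Fin m → E) : 0 ≤ weakNorm 𝕜 1 x := by
  rw [weakNorm_one_eq]
  exact Real.iSup_nonneg fun φ => by positivity

lemma sum_norm_apply_le_weakNorm {φ : E →L[𝕜] 𝕜} (hφ : ‖φ‖ ≤ 1) (x : Fin m → E) :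
    ∑ j, ‖φ (x j)‖ ≤ weakNorm 𝕜 1 x := by
  rw [weakNorm_one_eq]
  refine le_ciSup (f := fun φ : {φ : E →L[𝕜] 𝕜 // ‖φ‖ ≤ 1} => ∑ j, ‖φ.1 (x j)‖)
    ⟨∑ j, ‖x j‖, ?_⟩ ⟨φ, hφ⟩
  rintro - ⟨ψ, rfl⟩
  exact sum_le_sum fun j _ => ψ.1.le_of_opNorm_le ψ.2 _ |>.trans_eq (one_mul _)

lemma sum_norm_apply_le_norm_mul_weakNorm (φ : E →L[𝕜] 𝕜) (x : Fin m → E) :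
    ∑ j, ‖φ (x j)‖ ≤ ‖φ‖ * weakNorm 𝕜 1 x := by
  rcases (norm_nonneg φ).eq_or_lt with h0 | hpos
  · simp [norm_eq_zero.1 h0.symm]
  have hψ : ‖(‖φ‖⁻¹ : 𝕜) • φ‖ ≤ 1 := by
    rw [norm_smul, norm_inv, RCLike.norm_ofReal, abs_norm, inv_mul_cancel₀ hpos.ne']
  have := sum_norm_apply_le_weakNorm hψ x
  simp only [smul_apply, norm_smul, norm_inv, RCLike.norm_ofReal, abs_norm, ← mul_sum] at this
  rwa [inv_mul_le_iff₀ hpos] at this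

lemma norm_sum_units_smul_le_weakNorm (ε : Fin m → ℤˣ) (x : Fin m → E) :
    ‖∑ j, ε j • x j‖ ≤ weakNorm 𝕜 1 x := by
  obtain ⟨g, hg, hgy⟩ := exists_dual_vector'' 𝕜 (∑ j, ε j • x j)
  calc ‖∑ j, ε j • x j‖ = ‖g (∑ j, ε j • x j)‖ := by simp [hgy]
    _ ≤ ∑ j, ‖g (x j)‖ := by
        rw [map_sum]
        refine (norm_sum_le _ _).trans_eq (sum_congr rfl fun j _ => ?_)
        rcases Int.units_eq_one_or (ε j) with h | h <;> simp [h]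
    _ ≤ weakNorm 𝕜 1 x := sum_norm_apply_le_weakNorm hg x

end weakNorm

section multilinear

variable {𝕜 : Type*} [RCLike 𝕜] {N : ℕ}

lemma apply_insertNth {n : ℕ} {α : Fin (n + 1) → Type*} (x : ∀ k, Fin N → α k) (k : Fin (n + 1))
    (a : Fin N) (j : Fin n → Fin N) :
    (fun t => x t ((k.insertNth a j : Fin (n + 1) → Fin N) t)) =
      k.insertNth (x k a) fun i => x (k.succAbove i) (j i) := by
  funext t
  cases t using Fin.succAboveCases k <;> simp

lemma lpNorm_one_apply_le {E : Fin 1 → Type*} [∀ k, NormedAddCommGroup (E k)]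
    [∀ k, NormedSpace 𝕜 (E k)] (U : ContinuousMultilinearMap 𝕜 E 𝕜) (x : ∀ k, Fin N → E k) :
    lpNorm 1 (fun j : Fin 1 → Fin N => ‖U (fun k => x k (j k))‖₊) ≤
      ‖U‖₊ * (weakNorm 𝕜 1 (x 0)).toNNReal := by
  set φ := U.toContinuousLinearMap (0 : ∀ k, E k) 0
  have hφ : ‖φ‖ ≤ ‖U‖ := φ.opNorm_le_bound (norm_nonneg U) fun y => by
    simpa [φ] using U.le_opNorm (Function.update (0 : ∀ k, E k) 0 y)
  have hx : ∀ a, (fun k => x k a) = Function.update (0 : ∀ k, E k) 0 (x 0 a) := fun a => by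
    funext k
    fin_cases k
    simp
  rw [lpNorm_one, ← NNReal.coe_le_coe]
  push_cast
  rw [Real.coe_toNNReal _ (weakNorm_nonneg (x 0)),
    ← (Equiv.funUnique (Fin 1) (Fin N)).symm.sum_comp]
  calc ∑ a, ‖U (fun k => x k a)‖ = ∑ a, ‖φ (x 0 a)‖ := by simp [φ, hx]
    _ ≤ ‖φ‖ * weakNorm 𝕜 1 (x 0) := sum_norm_apply_le_norm_mul_weakNorm φ (x 0)
    _ ≤ ‖U‖ * weakNorm 𝕜 1 (x 0) := by
        gcongr
        exact weakNorm_nonneg _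

/-- Khintchine's inequality in the index of slot `k`, then Minkowski's inequality, then the
bound `C` for the forms `U.curryMid k y` with `y` a sign combination of the `x k a`. -/
lemma lpNorm_lpNorm_two_apply_le {n : ℕ} {E : Fin (n + 1) → Type*}
    [∀ k, NormedAddCommGroup (E k)] [∀ k, NormedSpace 𝕜 (E k)] {q : ℝ} (hq : 1 ≤ q) {C : ℝ≥0}
    (x : ∀ k, Fin N → E k) (k : Fin (n + 1))
    (hC : ∀ V : ContinuousMultilinearMap 𝕜 (fun i => E (k.succAbove i)) 𝕜,
      lpNorm q (fun j : Fin n → Fin N => ‖V fun i => x (k.succAbove i) (j i)‖₊) ≤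
        C * ‖V‖₊ * ∏ i, (weakNorm 𝕜 1 (x (k.succAbove i))).toNNReal)
    (U : ContinuousMultilinearMap 𝕜 E 𝕜) :
    (lpNorm q fun j : Fin n → Fin N => lpNorm 2 fun a =>
        ‖U fun t => x t ((k.insertNth a j : Fin (n + 1) → Fin N) t)‖₊) ≤
      NNReal.sqrt 3 * C * ‖U‖₊ * ∏ t, (weakNorm 𝕜 1 (x t)).toNNReal := by
  set y : (Fin N → ℤˣ) → E k := fun ε => ∑ a, ε a • x k a
  set z : (Fin n → Fin N) → ∀ i, E (k.succAbove i) := fun j i => x (k.succAbove i) (j i)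
  have hlin : ∀ j ε, ∑ a, ε a • U.curryMid k (x k a) (z j) = U.curryMid k (y ε) (z j) := by
    intro j ε
    simp [y, Units.smul_def]
  have hy : ∀ ε, ‖U.curryMid k (y ε)‖₊ ≤ ‖U‖₊ * (weakNorm 𝕜 1 (x k)).toNNReal := by
    intro ε
    rw [← NNReal.coe_le_coe]
    push_cast
    rw [Real.coe_toNNReal _ (weakNorm_nonneg _), ← ContinuousMultilinearMap.norm_curryMid k U]
    exact (U.curryMid k).le_of_opNorm_le_of_le le_rfl (norm_sum_units_smul_le_weakNorm ε (x k))
  have hq0 : 0 < q := by linarith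
  calc (lpNorm q fun j : Fin n → Fin N => lpNorm 2 fun a =>
        ‖U fun t => x t ((k.insertNth a j : Fin (n + 1) → Fin N) t)‖₊)
      ≤ lpNorm q fun j => NNReal.sqrt 3 * 𝔼 ε : Fin N → ℤˣ, ‖U.curryMid k (y ε) (z j)‖₊ := by
        refine lpNorm_mono hq0 fun j => ?_
        simp only [apply_insertNth, ← ContinuousMultilinearMap.curryMid_apply, ← hlin]
        exact lpNorm_two_nnnorm_le _
    _ ≤ NNReal.sqrt 3 * 𝔼 ε : Fin N → ℤˣ, lpNorm q fun j => ‖U.curryMid k (y ε) (z j)‖₊ := by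
        rw [lpNorm_const_mul hq0]
        gcongr
        exact lpNorm_expect_le hq _
    _ ≤ NNReal.sqrt 3 * 𝔼 _ε : Fin N → ℤˣ, C * (‖U‖₊ * (weakNorm 𝕜 1 (x k)).toNNReal) *
          ∏ i, (weakNorm 𝕜 1 (x (k.succAbove i))).toNNReal := by
        gcongr with ε
        exact (hC _).trans (by gcongr; exact hy ε)
    _ = _ := by
        rw [Fintype.expect_const, Fin.prod_univ_succAbove _ k]
        ring

theorem lpNorm_bhExponent_le (n : ℕ) (E : Fin (n + 1) → Type*)
    [∀ k, NormedAddCommGroup (E k)] [∀ k, NormedSpace 𝕜 (E k)]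
    (U : ContinuousMultilinearMap 𝕜 E 𝕜) (x : ∀ k, Fin N → E k) :
    lpNorm (bhExponent (n + 1)) (fun j : Fin (n + 1) → Fin N => ‖U fun k => x k (j k)‖₊) ≤
      NNReal.sqrt 3 ^ n * ‖U‖₊ * ∏ k, (weakNorm 𝕜 1 (x k)).toNNReal := by
  induction n with
  | zero =>
    have h1 : bhExponent (0 + 1) = 1 := by norm_num [bhExponent]
    simpa [h1] using lpNorm_one_apply_le U x
  | succ n ih =>
    calc _ ≤ ∏ k : Fin (n + 2), (lpNorm (bhExponent (n + 1)) fun j => lpNorm 2 fun a =>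
              ‖U fun t => x t ((k.insertNth a j : Fin (n + 2) → Fin N) t)‖₊) ^
              ((n + 2 : ℕ) : ℝ)⁻¹ :=
          lpNorm_bhExponent_le_prod fun j => ‖U fun k => x k (j k)‖₊
      _ ≤ ∏ _k : Fin (n + 2), (NNReal.sqrt 3 * NNReal.sqrt 3 ^ n * ‖U‖₊ *
              ∏ t, (weakNorm 𝕜 1 (x t)).toNNReal) ^ ((n + 2 : ℕ) : ℝ)⁻¹ := by
          gcongr with k
          exact lpNorm_lpNorm_two_apply_le (one_le_bhExponent n.succ_pos) x k (fun V => ih _ V _) U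
      _ = _ := by
          rw [prod_rpow_inv_card (by omega), pow_succ]
          ring

end multilinear

end BohnenblustHille

/-- **Bohnenblust–Hille inequality** (rewritten form). For every `n ≥ 1` there is `C_n ≥ 0`
such that for all Banach spaces `E 0, …, E (n-1)`, every continuous `n`-linear form `U`,
every `N` and all finite families `x k : Fin N → E k`,
`(∑_{j} |U (x (j ·))|^{2n/(n+1)})^{(n+1)/(2n)} ≤ C_n ‖U‖ ∏ₖ ‖(x k)‖_{w,1}`. -/
theorem bohnenblust_hille (𝕜 : Type*) [RCLike 𝕜] (n : ℕ) (hn : 0 < n) :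
    ∃ C : ℝ, 0 ≤ C ∧
      ∀ (E : Fin n → Type) [∀ k, NormedAddCommGroup (E k)] [∀ k, NormedSpace 𝕜 (E k)]
        [∀ k, CompleteSpace (E k)] (U : ContinuousMultilinearMap 𝕜 E 𝕜) (N : ℕ)
        (x : ∀ k, Fin N → E k),
        (∑ j : Fin n → Fin N, ‖U (fun k => x k (j k))‖ ^ ((2 * n : ℝ) / (n + 1))) ^
            ((n + 1 : ℝ) / (2 * n)) ≤
          C * ‖U‖ * ∏ k, weakNorm 𝕜 1 (x k) := by
  obtain ⟨m, rfl⟩ : ∃ m, n = m + 1 := ⟨n - 1, by omega⟩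
  refine ⟨√3 ^ m, by positivity, fun E _ _ _ U N x => ?_⟩
  have h := NNReal.coe_le_coe.2 (BohnenblustHille.lpNorm_bhExponent_le m E U x)
  rw [show ((m + 1 : ℕ) + 1 : ℝ) / (2 * (m + 1 : ℕ)) = 1 / BohnenblustHille.bhExponent (m + 1)
    from (one_div_div _ _).symm]
  push_cast [BohnenblustHille.lpNorm, Real.coe_toNNReal _ (BohnenblustHille.weakNorm_nonneg _)]
    at h
  exact h
end
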